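/- arXiv:1812.05573 — 5 statements merged into one kernel-verified Lean document; each statement's English description precedes it below -/
import Mathlib

section
/- Let \mu be a compactly supported Borel probability measure. If dim_L \mu > 0 (the lower Assouad dimension of \mu is positive), then \mu is uniformly perfect: there exist constants 0<c<1 and \gamma>0 such that \mu(B(x,R)\setminus B(x,cR)) \geq \gamma\,\mu(B(x,R)) for all x in supp \mu and all 0<R\leq diam(supp \mu). -/
open MeasureTheory Metric Set

/-- The support of a measure on a metric space. -/
def msupp {X : Type*} [MetricSpace X] [MeasurableSpace X] (μ : Measure X) : Set X :=
  {x | ∀ r > 0, 0 < μ (ball x r)}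

def lowerHSet {X : Type*} [MetricSpace X] [MeasurableSpace X] (μ : Measure X) (δ : ℝ) : Set ℝ :=
  {s | 0 ≤ s ∧ ∃ c₁ > (0:ℝ), ∃ c₂ > (0:ℝ), ∀ x ∈ msupp μ, ∀ r R : ℝ,
    0 < r → 0 < R → r ≤ R ^ (1 + δ) → R ^ (1 + δ) ≤ c₁ →
    c₂ * (R / r) ^ s * (μ (ball x r)).toReal ≤ (μ (ball x R)).toReal}

/-- The lower Assouad (regularity) dimension of a measure. -/
noncomputable def dimL {X : Type*} [MetricSpace X] [MeasurableSpace X] (μ : Measure X) : ℝ :=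
  sSup (lowerHSet μ 0)

theorem positive_lower_dim_implies_uniformly_perfect
    {X : Type*} [MetricSpace X] [MeasurableSpace X] [BorelSpace X]
    (μ : Measure X) [IsProbabilityMeasure μ] (hcpt : IsCompact (msupp μ))
    (hpos : 0 < dimL μ) :
    ∃ c γ : ℝ, 0 < c ∧ c < 1 ∧ 0 < γ ∧
      ∀ x ∈ msupp μ, ∀ R : ℝ, 0 < R → R ≤ diam (msupp μ) →
        ENNReal.ofReal γ * μ (ball x R) ≤ μ (ball x R \ ball x (c * R)) := by
  unfold dimL at hpos
  have hne : (lowerHSet μ 0).Nonempty := by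
    by_contra hemp
    rw [Set.not_nonempty_iff_eq_empty] at hemp
    rw [hemp, Real.sSup_empty] at hpos
    exact lt_irrefl 0 hpos
  obtain ⟨s, hs_mem, hs_pos⟩ := exists_lt_of_lt_csSup hne hpos
  obtain ⟨-, c₁, hc₁, c₂, hc₂, h⟩ := hs_mem
  set D := diam (msupp μ) with hD
  by_cases hDpos : 0 < D
  swap
  · refine ⟨1/2, 1/2, by norm_num, by norm_num, by norm_num, ?_⟩
    intro x hx R hR hRD
    exact absurd (hR.trans_le hRD) hDpos
  set K := min ((c₂/2) ^ (1/s : ℝ)) (1/2) with hK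
  have hK0 : 0 < K := lt_min (Real.rpow_pos_of_pos (by linarith) _) (by norm_num)
  have hKhalf : K ≤ 1/2 := min_le_right _ _
  have hKs : K ^ s ≤ c₂ / 2 := by
    calc K ^ s ≤ ((c₂/2) ^ (1/s : ℝ)) ^ s :=
          Real.rpow_le_rpow hK0.le (min_le_left _ _) hs_pos.le
      _ = c₂ / 2 := by
          rw [← Real.rpow_mul (by linarith), one_div,
            inv_mul_cancel₀ (ne_of_gt hs_pos), Real.rpow_one]
  set c := min K (K * c₁ / D) with hc
  have hc0 : 0 < c := lt_min hK0 (by positivity)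
  have hc1 : c < 1 := lt_of_le_of_lt ((min_le_left _ _).trans hKhalf) (by norm_num)
  refine ⟨c, 1/2, hc0, hc1, by norm_num, ?_⟩
  intro x hx R hR hRD
  set R' := min R c₁ with hR'
  have hR'0 : 0 < R' := lt_min hR hc₁
  have hcRK : c * R ≤ K * R' := by
    have h1 : c ≤ K := min_le_left _ _
    have h2 : c ≤ K * c₁ / D := min_le_right _ _
    have h3 : c * D ≤ K * c₁ := (le_div_iff₀ hDpos).mp h2
    have h4 : c * R ≤ c * D := by nlinarith
    rcases le_total R c₁ with h'|h'
    · have h5 : R' = R := min_eq_left h'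
      rw [h5]; nlinarith
    · have h5 : R' = c₁ := min_eq_right h'
      rw [h5]; nlinarith
  have hcR_le_R' : c * R ≤ R' := hcRK.trans (by nlinarith)
  have hpow : R' ^ ((1:ℝ) + 0) = R' := by rw [add_zero, Real.rpow_one]
  have key := h x hx (c*R) R' (by positivity) hR'0 (by rw [hpow]; exact hcR_le_R')
    (by rw [hpow]; exact min_le_right _ _)
  have hratio : 1/K ≤ R' / (c*R) := by
    rw [div_le_div_iff₀ hK0 (by positivity)]
    nlinarith
  have h2le : 2 ≤ c₂ * (R' / (c*R)) ^ s := by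
    have hKs0 : 0 < K ^ s := Real.rpow_pos_of_pos hK0 s
    have hr1 : (K ^ s)⁻¹ ≤ (R' / (c*R)) ^ s := by
      rw [← Real.inv_rpow hK0.le]
      exact Real.rpow_le_rpow (by positivity) (by rwa [one_div] at hratio) hs_pos.le
    calc (2:ℝ) ≤ c₂ * (K ^ s)⁻¹ := by
          rw [← div_eq_mul_inv, le_div_iff₀ hKs0]; linarith
      _ ≤ c₂ * (R' / (c*R)) ^ s := by nlinarith
  have hA2 : 2 * (μ (ball x (c*R))).toReal ≤ (μ (ball x R)).toReal := by
    have hm : (μ (ball x R')).toReal ≤ (μ (ball x R)).toReal :=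
      ENNReal.toReal_mono (measure_ne_top μ _)
        (measure_mono (ball_subset_ball (min_le_left _ _)))
    nlinarith [ENNReal.toReal_nonneg (a := μ (ball x (c*R)))]
  have hsub : ball x (c*R) ⊆ ball x R := ball_subset_ball (by nlinarith)
  have hdiff : μ (ball x R \ ball x (c*R)) = μ (ball x R) - μ (ball x (c*R)) :=
    measure_diff hsub measurableSet_ball.nullMeasurableSet (measure_ne_top μ _)
  rw [hdiff]
  have hBne : μ (ball x R) ≠ ⊤ := measure_ne_top μ _
  have hAne : μ (ball x (c*R)) ≠ ⊤ := measure_ne_top μ _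
  rw [← ENNReal.ofReal_toReal hBne, ← ENNReal.ofReal_toReal hAne,
    ← ENNReal.ofReal_sub _ ENNReal.toReal_nonneg, ← ENNReal.ofReal_mul (by norm_num)]
  apply ENNReal.ofReal_le_ofReal
  linarith
end

section
/- Let 0<\beta<\theta<1 with \log\theta/\log\beta irrational. Then the set L = { m\log\beta + n\log\theta : m,n \in N }, listed in decreasing order as (y_j), satisfies y_j - y_{j+1} \to 0 as j \to \infty. -/
/-!
Write `a = log β` and `b = log θ`, both negative with `b / a` irrational. Dirichlet approximation
for `b / a` yields combinations `p a - q b` with `p, q ≥ 1` in `(-ε, 0)`, and, with the roles of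
`a` and `b` swapped, in `(0, ε)`. Far down in `L = {m a + n b}` one of `m`, `n` is large, so one of
these two steps stays inside `L` and moves down by less than `ε`; hence consecutive gaps are
eventually below `ε`.
-/

open Filter Set

theorem Irrational.exists_int_sub_nat_mul_mem_Ioo {ξ : ℝ} (hξ : Irrational ξ) {δ : ℝ}
    (hδ : 0 < δ) : ∃ k : ℕ, 0 < k ∧ ∃ j : ℤ, j - k * ξ ∈ Ioo 0 δ := by
  have hne : ∀ k : ℕ, 0 < k → ∀ j : ℤ, (j : ℝ) - k * ξ ≠ 0 := fun k hk j h =>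
    ((hξ.natCast_mul hk.ne').sub_intCast j).ne_zero (by linarith)
  obtain ⟨n, hn⟩ := exists_nat_one_div_lt hδ
  obtain ⟨j, k, hk, -, hr⟩ := Real.exists_int_int_abs_mul_sub_le ξ n.succ_pos
  lift k to ℕ using hk.le
  have hk : 0 < k := by exact_mod_cast hk
  set r : ℝ := k * ξ - j
  have hr_small : |r| ≤ 1 / 2 ∧ |r| < δ := by
    push_cast at hr
    have : (0 : ℝ) ≤ n := n.cast_nonneg
    constructor
    · calc |r| ≤ 1 / ((n : ℝ) + 1 + 1) := hr
        _ ≤ 1 / 2 := by gcongr; linarith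
    · calc |r| ≤ 1 / ((n : ℝ) + 1 + 1) := hr
        _ < 1 / ((n : ℝ) + 1) := by gcongr; linarith
        _ < δ := hn
  rcases lt_or_gt_of_ne (show r ≠ 0 from fun h => hne k hk j (by linarith)) with hneg | hpos
  · exact ⟨k, hk, j, by linarith, by linarith [neg_abs_le r]⟩
  · -- `N = ⌊1 / r⌋` steps of size `r` land in `(1 - r, 1]`.
    rw [abs_of_pos hpos] at hr_small
    set N := ⌊1 / r⌋₊
    have hN : 0 < N := Nat.floor_pos.2 (by rw [le_div_iff₀ hpos]; linarith)
    have hNr_le : (N : ℝ) * r ≤ 1 := by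
      have := Nat.floor_le (one_div_pos.2 hpos).le
      rwa [le_div_iff₀ hpos] at this
    have hNr_gt : 1 < ((N : ℝ) + 1) * r := by
      have := Nat.lt_floor_add_one (1 / r)
      rwa [div_lt_iff₀ hpos] at this
    have hval : ((N * j + 1 : ℤ) : ℝ) - ((N * k : ℕ) : ℝ) * ξ = 1 - N * r := by
      push_cast; ring
    have hne' := hne (N * k) (Nat.mul_pos hN hk) (N * j + 1)
    refine ⟨N * k, Nat.mul_pos hN hk, N * j + 1, ?_, ?_⟩ <;> rw [hval] at hne' ⊢
    · exact lt_of_le_of_ne (by linarith) (Ne.symm hne')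
    · linarith

theorem exists_nat_mul_sub_nat_mul_mem_Ioo {a b : ℝ} (ha : a < 0) (hb : b < 0)
    (hirr : Irrational (b / a)) {ε : ℝ} (hε : 0 < ε) :
    ∃ p q : ℕ, 0 < p ∧ 0 < q ∧ (p : ℝ) * a - q * b ∈ Ioo (-ε) 0 := by
  obtain ⟨q, hq, p, hp_lo, hp_hi⟩ :=
    hirr.exists_int_sub_nat_mul_mem_Ioo (div_pos hε (neg_pos.2 ha))
  have hξ : 0 < b / a := div_pos_of_neg_of_neg hb ha
  have hp : (0 : ℤ) < p := by
    have : (0 : ℝ) < q * (b / a) := mul_pos (by exact_mod_cast hq) hξ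
    exact_mod_cast this.trans (sub_pos.1 hp_lo)
  lift p to ℕ using hp.le
  have hfactor : (p : ℝ) * a - q * b = a * (p - q * (b / a)) := by
    field_simp [ha.ne]
  refine ⟨p, q, by exact_mod_cast hp, hq, ?_, ?_⟩ <;> push_cast at hp_lo hp_hi <;> rw [hfactor]
  · rw [lt_div_iff₀ (neg_pos.2 ha)] at hp_hi
    linarith
  · exact mul_neg_of_neg_of_pos ha hp_lo

def positiveCombinations (a b : ℝ) : Set ℝ :=
  {x | ∃ m n : ℕ, 0 < m ∧ 0 < n ∧ x = m * a + n * b}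

theorem not_bddBelow_positiveCombinations {a : ℝ} (ha : a < 0) (b : ℝ) :
    ¬BddBelow (positiveCombinations a b) := by
  refine not_bddBelow_iff.2 fun c => ?_
  obtain ⟨m, hm⟩ := exists_nat_gt ((b - c) / -a)
  rw [div_lt_iff₀ (neg_pos.2 ha)] at hm
  refine ⟨(m + 1 : ℕ) * a + (1 : ℕ) * b, ⟨m + 1, 1, m.succ_pos, one_pos, rfl⟩, ?_⟩
  push_cast
  linarith

theorem exists_forall_lt_exists_mem_positiveCombinations {a b : ℝ} (ha : a < 0) (hb : b < 0)
    (hirr : Irrational (b / a)) {ε : ℝ} (hε : 0 < ε) :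
    ∃ C, ∀ x ∈ positiveCombinations a b, x < C →
      ∃ x' ∈ positiveCombinations a b, x' ∈ Ioo (x - ε) x := by
  obtain ⟨p, q, hp, hq, hdown_lo, hdown_hi⟩ :=
    exists_nat_mul_sub_nat_mul_mem_Ioo ha hb hirr hε
  obtain ⟨q', p', hq', hp', hup_lo, hup_hi⟩ :=
    exists_nat_mul_sub_nat_mul_mem_Ioo hb ha (by simpa using hirr.inv) hε
  refine ⟨p' * a + q * b, ?_⟩
  rintro x ⟨m, n, hm, hn, rfl⟩ hx
  by_cases hqn : q < n
  · refine ⟨(m + p : ℕ) * a + (n - q : ℕ) * b, ⟨m + p, n - q, by omega, by omega, rfl⟩, ?_⟩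
    push_cast [Nat.cast_sub hqn.le]
    constructor <;> linarith
  · have hpm : p' < m := by
      by_contra! hmp
      have hm' : (m : ℝ) ≤ p' := by exact_mod_cast hmp
      have hn' : (n : ℝ) ≤ q := by exact_mod_cast not_lt.1 hqn
      nlinarith
    refine ⟨(m - p' : ℕ) * a + (n + q' : ℕ) * b, ⟨m - p', n + q', by omega, by omega, rfl⟩, ?_⟩
    push_cast [Nat.cast_sub hpm.le]
    constructor <;> linarith

theorem StrictAnti.tendsto_sub_succ_zero {y : ℕ → ℝ} (hy : StrictAnti y)
    (hgap : ∀ ε > 0, ∀ᶠ j in atTop, ∃ i, y i ∈ Ioo (y j - ε) (y j)) :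
    Tendsto (fun j => y j - y (j + 1)) atTop (nhds 0) := by
  refine Metric.tendsto_nhds.2 fun ε hε => ?_
  filter_upwards [hgap ε hε] with j ⟨i, hi_lo, hi_hi⟩
  have hyi : y i ≤ y (j + 1) := hy.antitone (hy.lt_iff_gt.1 hi_hi)
  have hpos : 0 < y j - y (j + 1) := sub_pos.2 (hy j.lt_succ_self)
  rw [Real.dist_eq, sub_zero, abs_of_pos hpos]
  linarith

theorem gaps_tend_to_zero
    (β θ : ℝ) (hβ : 0 < β) (hβθ : β < θ) (hθ : θ < 1)
    (hirr : Irrational (Real.log θ / Real.log β))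
    (y : ℕ → ℝ) (hmono : StrictAnti y)
    (hrange : Set.range y =
      {x : ℝ | ∃ m n : ℕ, 0 < m ∧ 0 < n ∧
        x = m * Real.log β + n * Real.log θ}) :
    Tendsto (fun j => y j - y (j + 1)) atTop (nhds 0) := by
  change range y = positiveCombinations _ _ at hrange
  have ha : Real.log β < 0 := Real.log_neg hβ (hβθ.trans hθ)
  have hb : Real.log θ < 0 := Real.log_neg (hβ.trans hβθ) hθ
  have hbot : Tendsto y atTop atBot := by
    refine tendsto_atTop_atBot_of_antitone hmono.antitone fun c => ?_
    obtain ⟨_, ⟨j, rfl⟩, hj⟩ :=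
      not_bddBelow_iff.1 (hrange ▸ not_bddBelow_positiveCombinations ha _) c
    exact ⟨j, hj.le⟩
  refine hmono.tendsto_sub_succ_zero fun ε hε => ?_
  obtain ⟨C, hC⟩ := exists_forall_lt_exists_mem_positiveCombinations ha hb hirr hε
  filter_upwards [hbot.eventually_lt_atBot C] with j hj
  obtain ⟨_, hx, hx_mem⟩ := hC (y j) (hrange ▸ mem_range_self j) hj
  obtain ⟨i, rfl⟩ := hrange ▸ hx
  exact ⟨i, hx_mem⟩
end

section
/- Let 0<\beta<\theta<1 with \log\theta/\log\beta irrational, and let (\theta_i) be a sequence of positive reals tending to 0. Then for every sufficiently small \eta>0 there exists i_0 such that for all i \geq i_0 there exist positive integers m,n with \eta/(2\theta_i) \leq 1/\theta_i - 1/(\theta^n \beta^m) \leq 4\eta/\theta_i. -/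
open Filter Topology

/-!
Put `A = -log θ` and `B = -log β`. As `A / B` is irrational, the group `ℤA + ℤB` is dense, so
it contains some `δ = pA + qB` in `(0, L)`. A large `x` is reached from a base point `NA + MB`
by steps of `A` up to within `A` below `x`, and then by at most `K ≈ A / δ` steps of `δ` into
`[x, x + L]`; with `N, M > K max(|p|, |q|)` both exponents stay positive. Exponentiating,
`t / (θ ^ n * β ^ m)` can be put into any interval `[c, d] ⊂ (0, ∞)` once `t` is small, and
`[c, d] = [1 - 4η, 1 - η / 2]` gives the theorem.
-/

theorem exists_int_mul_add_int_mul_mem_Ioo {a b : ℝ} (h : Irrational (a / b)) {ε : ℝ}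
    (hε : 0 < ε) : ∃ p q : ℤ, (p : ℝ) * a + q * b ∈ Set.Ioo 0 ε := by
  obtain ⟨z, hz, hzε⟩ := (dense_addSubgroupClosure_pair_iff.mpr h).exists_between hε
  obtain ⟨p, q, rfl⟩ := AddSubgroup.mem_closure_pair.mp hz
  exact ⟨p, q, by simpa only [zsmul_eq_mul] using hzε⟩

theorem neg_mul_abs_le_mul {R : Type*} [Ring R] [LinearOrder R] [IsStrictOrderedRing R]
    {k K p : R} (hk : 0 ≤ k) (hkK : k ≤ K) : -(K * |p|) ≤ k * p := by
  calc -(K * |p|) ≤ -(k * |p|) := neg_le_neg (mul_le_mul_of_nonneg_right hkK (abs_nonneg p))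
    _ = k * -|p| := (mul_neg k |p|).symm
    _ ≤ k * p := mul_le_mul_of_nonneg_left (neg_abs_le p) hk

theorem eventually_exists_nat_mul_add_nat_mul_mem_Icc {A B L : ℝ} (hA : 0 < A)
    (hirr : Irrational (A / B)) (hL : 0 < L) :
    ∀ᶠ x in atTop, ∃ n m : ℕ, 0 < n ∧ 0 < m ∧ (n : ℝ) * A + m * B ∈ Set.Icc x (x + L) := by
  obtain ⟨p, q, hδ₀, hδL⟩ := exists_int_mul_add_int_mul_mem_Ioo hirr hL
  set δ := (p : ℝ) * A + q * B
  -- `K` steps of size `δ` more than cover a gap of length `A`.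
  set K : ℤ := ⌈A / δ⌉ + 1
  set N : ℤ := 1 + K * |p|
  set M : ℤ := 1 + K * |q|
  filter_upwards [eventually_ge_atTop ((N + 1) * A + M * B)] with x hx
  obtain ⟨j, ⟨hj₁, hj₂⟩, -⟩ := existsUnique_add_zsmul_mem_Ico hA (N * A + M * B) (x - A)
  obtain ⟨k, ⟨hk₁, hk₂⟩, -⟩ := existsUnique_add_zsmul_mem_Ico hδ₀ (N * A + M * B + j • A) x
  simp only [zsmul_eq_mul] at hj₁ hj₂ hk₁ hk₂
  have hj : 0 ≤ j := by
    have : (0 : ℝ) * A ≤ j * A := by linarith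
    exact_mod_cast le_of_mul_le_mul_right this hA
  have hk : 0 ≤ k := by
    have : (0 : ℝ) * δ ≤ k * δ := by linarith
    exact_mod_cast le_of_mul_le_mul_right this hδ₀
  have hkK : k ≤ K := by
    have : (k : ℝ) * δ < (A / δ + 1) * δ := by
      rw [add_mul, div_mul_cancel₀ _ hδ₀.ne']; linarith
    have : (k : ℝ) < K := by
      push_cast [K]; linarith [lt_of_mul_lt_mul_right this hδ₀.le, Int.le_ceil (A / δ)]
    exact_mod_cast this.le
  have hn : 0 < N + j + k * p := by linarith [neg_mul_abs_le_mul (p := p) hk hkK]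
  have hm : 0 < M + k * q := by linarith [neg_mul_abs_le_mul (p := q) hk hkK]
  lift N + j + k * p to ℕ using hn.le with n hn'
  lift M + k * q to ℕ using hm.le with m hm'
  refine ⟨n, m, by omega, by omega, ?_⟩
  have hval : (n : ℝ) * A + m * B = N * A + M * B + j * A + k * δ := by
    rw [show (n : ℝ) = N + j + k * p by exact_mod_cast hn',
      show (m : ℝ) = M + k * q by exact_mod_cast hm']
    ring
  rw [hval]
  constructor <;> linarith

theorem eventually_exists_div_pow_mul_pow_mem_Icc {β θ : ℝ} (hβ : 0 < β) (hθ : 0 < θ)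
    (hθ₁ : θ < 1) (hirr : Irrational (Real.log θ / Real.log β)) {c d : ℝ}
    (hc : 0 < c) (hcd : c < d) :
    ∀ᶠ t in 𝓝[>] 0, ∃ m n : ℕ, 0 < m ∧ 0 < n ∧ t / (θ ^ n * β ^ m) ∈ Set.Icc c d := by
  have hlogθ := Real.log_neg hθ hθ₁
  have hlogcd : Real.log c < Real.log d := Real.log_lt_log hc hcd
  have hsemigroup := eventually_exists_nat_mul_add_nat_mul_mem_Icc (neg_pos.mpr hlogθ)
    (by rwa [neg_div_neg_eq]) (sub_pos.mpr hlogcd)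
  have hx : Tendsto (fun t => -Real.log t + Real.log c) (𝓝[>] 0) atTop :=
    tendsto_atTop_add_const_right _ _ (tendsto_neg_atBot_atTop.comp Real.tendsto_log_nhdsGT_zero)
  filter_upwards [hx.eventually hsemigroup, self_mem_nhdsWithin]
    with t ⟨n, m, hn, hm, h₁, h₂⟩ (ht : 0 < t)
  have hP : 0 < θ ^ n * β ^ m := by positivity
  have hlog : Real.log (t / (θ ^ n * β ^ m))
      = Real.log t - (n * Real.log θ + m * Real.log β) := by
    rw [Real.log_div ht.ne' hP.ne', Real.log_mul (by positivity) (by positivity),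
      Real.log_pow, Real.log_pow]
  refine ⟨m, n, hm, hn, ?_, ?_⟩
  · rw [← Real.log_le_log_iff hc (by positivity), hlog]; linarith
  · rw [← Real.log_le_log_iff (by positivity) (hc.trans hcd), hlog]; linarith

theorem approximation_by_powers
    (β θ : ℝ) (hβ : 0 < β) (hβθ : β < θ) (hθ : θ < 1)
    (hirr : Irrational (Real.log θ / Real.log β))
    (θi : ℕ → ℝ) (hpos : ∀ i, 0 < θi i)
    (hlim : Tendsto θi atTop (nhds 0)) :
    ∃ η₀ > (0:ℝ), ∀ η : ℝ, 0 < η → η ≤ η₀ →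
      ∃ i₀ : ℕ, ∀ i ≥ i₀, ∃ m n : ℕ, 0 < m ∧ 0 < n ∧
        η / (2 * θi i) ≤ 1 / θi i - 1 / (θ ^ n * β ^ m) ∧
        1 / θi i - 1 / (θ ^ n * β ^ m) ≤ 4 * η / θi i := by
  refine ⟨1 / 8, by norm_num, fun η hη hη₀ => ?_⟩
  have hθ₀ : 0 < θ := hβ.trans hβθ
  have hθi : Tendsto θi atTop (𝓝[>] 0) := tendsto_nhdsWithin_iff.mpr ⟨hlim, .of_forall hpos⟩
  obtain ⟨i₀, hi₀⟩ := eventually_atTop.mp <| hθi.eventually <|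
    eventually_exists_div_pow_mul_pow_mem_Icc hβ hθ₀ hθ hirr
      (c := 1 - 4 * η) (d := 1 - η / 2) (by linarith) (by linarith)
  refine ⟨i₀, fun i hi => ?_⟩
  obtain ⟨m, n, hm, hn, h₁, h₂⟩ := hi₀ i hi
  have ht := hpos i
  have hP : 0 < θ ^ n * β ^ m := by positivity
  have hdiff : 1 / θi i - 1 / (θ ^ n * β ^ m) = (1 - θi i / (θ ^ n * β ^ m)) / θi i := by
    field_simp
  refine ⟨m, n, hm, hn, ?_, ?_⟩ <;> rw [hdiff]
  · rw [← div_div]; exact div_le_div_of_nonneg_right (by linarith) ht.le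
  · exact div_le_div_of_nonneg_right (by linarith) ht.le
end

section
/- Let X be a metric space, x \in X, and 0 < r_k < r_{k-1} < \cdots < r_1 < R. Then the maximal number M_r(B(x,R)) of pairwise disjoint closed balls of radius r = r_k centred in B(x,R) satisfies M_r(B(x,R)) \geq M_{r_1}(B(x,R-r_1)) \cdot \prod_{j=1}^{k-1} \inf_y M_{r_{j+1}}(B(y, r_j - r_{j+1})), where the infima are over all points y of the space. -/
open Metric Set

section Helpers

variable {X : Type*} [MetricSpace X]

/-- `packingNumberAux r F` mirrors `packingNumber` below, used for helper lemmas. -/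
noncomputable def packingNumberAux (r : ℝ) (F : Set X) : ℕ∞ :=
  ⨆ (s : Finset X) (_ : ↑s ⊆ F ∧
      (s : Set X).PairwiseDisjoint (fun y => closedBall y r)), (s.card : ℕ∞)

lemma card_le_packingNumberAux {r : ℝ} {F : Set X} {s : Finset X} (h1 : ↑s ⊆ F)
    (h2 : (s : Set X).PairwiseDisjoint (fun y => closedBall y r)) :
    (s.card : ℕ∞) ≤ packingNumberAux r F :=
  le_iSup_of_le s (le_iSup_of_le ⟨h1, h2⟩ le_rfl)

lemma exists_packingAux {r : ℝ} {F : Set X} {m : ℕ} (h : (m : ℕ∞) ≤ packingNumberAux r F) :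
    ∃ s : Finset X, ↑s ⊆ F ∧
      (s : Set X).PairwiseDisjoint (fun y => closedBall y r) ∧ m ≤ s.card := by
  rcases Nat.eq_zero_or_pos m with rfl | hm
  · exact ⟨∅, by simp, by simp, le_rfl⟩
  · have hlt : ((m - 1 : ℕ) : ℕ∞) < packingNumberAux r F :=
      lt_of_lt_of_le (by exact_mod_cast Nat.sub_lt hm one_pos) h
    rw [packingNumberAux, lt_iSup_iff] at hlt
    obtain ⟨s, hs⟩ := hlt
    rw [lt_iSup_iff] at hs
    obtain ⟨⟨h1, h2⟩, hcard⟩ := hs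
    refine ⟨s, h1, h2, ?_⟩
    have : (m - 1 : ℕ) < s.card := by exact_mod_cast hcard
    omega

lemma packingNumberAux_mono {r : ℝ} {F G : Set X} (hFG : F ⊆ G) :
    packingNumberAux r F ≤ packingNumberAux r G :=
  iSup_le fun _ => iSup_le fun ⟨h1, h2⟩ => card_le_packingNumberAux (h1.trans hFG) h2

lemma ENat.mul_le_of_forall' {a b c : ℕ∞}
    (h : ∀ n m : ℕ, (n : ℕ∞) ≤ a → (m : ℕ∞) ≤ b → ((n * m : ℕ) : ℕ∞) ≤ c) :
    a * b ≤ c := by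
  induction a using ENat.recTopCoe with
  | top =>
    rcases eq_or_ne b 0 with rfl | hb
    · simp
    · have hb1 : (1 : ℕ∞) ≤ b := ENat.one_le_iff_ne_zero.mpr hb
      have hc : ∀ n : ℕ, (n : ℕ∞) ≤ c := fun n => by
        simpa using h n 1 le_top hb1
      have : c = ⊤ := by
        induction c using ENat.recTopCoe with
        | top => rfl
        | coe p =>
          have := hc (p + 1)
          exfalso
          exact_mod_cast absurd this (by exact_mod_cast Nat.not_succ_le_self p)
      simp [this]
  | coe n =>
    induction b using ENat.recTopCoe with
    | top =>
      rcases eq_or_ne n 0 with rfl | hn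
      · simp
      · have hn1 : (1 : ℕ∞) ≤ (n : ℕ∞) := by exact_mod_cast Nat.one_le_iff_ne_zero.mpr hn
        have hc : ∀ m : ℕ, (m : ℕ∞) ≤ c := fun m => by
          simpa using h 1 m hn1 le_top
        have : c = ⊤ := by
          induction c using ENat.recTopCoe with
          | top => rfl
          | coe p =>
            have := hc (p + 1)
            exfalso
            exact_mod_cast absurd this (by exact_mod_cast Nat.not_succ_le_self p)
        simp [this]
    | coe m =>
      exact_mod_cast h n m le_rfl le_rfl

lemma packing_keyAux (x : X) (ρ r' r'' : ℝ) (h0 : 0 ≤ r'') (h1 : r'' ≤ r') :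
    packingNumberAux r' (closedBall x ρ) *
        (⨅ y : X, packingNumberAux r'' (closedBall y (r' - r''))) ≤
      packingNumberAux r'' (closedBall x (ρ + (r' - r''))) := by
  classical
  apply ENat.mul_le_of_forall'
  intro n m hn hm
  obtain ⟨s, hsF, hsd, hscard⟩ := exists_packingAux hn
  have hty : ∀ y : X, ∃ t : Finset X, ↑t ⊆ closedBall y (r' - r'') ∧
      (t : Set X).PairwiseDisjoint (fun z => closedBall z r'') ∧ m ≤ t.card := by
    intro y
    exact exists_packingAux (le_trans hm (iInf_le _ y))
  choose t ht1 ht2 ht3 using hty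
  have hsub : ∀ i : X, ∀ z ∈ t i, closedBall z r'' ⊆ closedBall i r' := by
    intro i z hz
    have hd : dist z i ≤ r' - r'' := by
      have := ht1 i (Finset.mem_coe.mpr hz)
      simpa [mem_closedBall] using this
    exact closedBall_subset_closedBall' (by linarith)
  have hdisj : ∀ i ∈ s, ∀ j ∈ s, i ≠ j → Disjoint (t i) (t j) := by
    intro i hi j hj hij
    rw [Finset.disjoint_left]
    intro z hzi hzj
    have hb : Disjoint (closedBall i r') (closedBall j r') :=
      hsd (Finset.mem_coe.mpr hi) (Finset.mem_coe.mpr hj) hij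
    have hz1 : z ∈ closedBall i r' := hsub i z hzi (mem_closedBall_self h0)
    have hz2 : z ∈ closedBall j r' := hsub j z hzj (mem_closedBall_self h0)
    exact Set.disjoint_left.mp hb hz1 hz2
  set u := s.biUnion t with hu
  have hucard : n * m ≤ u.card := by
    rw [hu, Finset.card_biUnion hdisj]
    calc n * m ≤ s.card * m := Nat.mul_le_mul_right m hscard
    _ ≤ ∑ i ∈ s, (t i).card := by
        rw [← Finset.sum_const_nat (m := m) (fun _ _ => rfl)]
        exact Finset.sum_le_sum (fun i _ => ht3 i)
  have huF : ↑u ⊆ closedBall x (ρ + (r' - r'')) := by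
    intro z hz
    obtain ⟨i, hi, hzi⟩ := Finset.mem_biUnion.mp (Finset.mem_coe.mp hz)
    have h1' : dist z i ≤ r' - r'' := by
      simpa [mem_closedBall] using ht1 i (Finset.mem_coe.mpr hzi)
    have h2' : dist i x ≤ ρ := by simpa [mem_closedBall] using hsF (Finset.mem_coe.mpr hi)
    have := dist_triangle z i x
    simp only [mem_closedBall]
    linarith
  have hud : (u : Set X).PairwiseDisjoint (fun z => closedBall z r'') := by
    intro z1 hz1 z2 hz2 hne
    obtain ⟨i, hi, hz1i⟩ := Finset.mem_biUnion.mp (Finset.mem_coe.mp hz1)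
    obtain ⟨j, hj, hz2j⟩ := Finset.mem_biUnion.mp (Finset.mem_coe.mp hz2)
    rcases eq_or_ne i j with rfl | hij
    · exact ht2 i (Finset.mem_coe.mpr hz1i) (Finset.mem_coe.mpr hz2j) hne
    · have hb : Disjoint (closedBall i r') (closedBall j r') :=
        hsd (Finset.mem_coe.mpr hi) (Finset.mem_coe.mpr hj) hij
      exact hb.mono (hsub i z1 hz1i) (hsub j z2 hz2j)
  calc ((n * m : ℕ) : ℕ∞) ≤ (u.card : ℕ∞) := by exact_mod_cast hucard
  _ ≤ _ := card_le_packingNumberAux huF hud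

end Helpers

/-- `packingNumber r F` : the maximal number of pairwise disjoint closed balls of
radius `r` with centres in `F` (as an extended natural number). -/
noncomputable def packingNumber {X : Type*} [MetricSpace X] (r : ℝ) (F : Set X) : ℕ∞ :=
  ⨆ (s : Finset X) (_ : ↑s ⊆ F ∧
      (s : Set X).PairwiseDisjoint (fun y => closedBall y r)), (s.card : ℕ∞)

lemma packingNumber_eq_aux {X : Type*} [MetricSpace X] (r : ℝ) (F : Set X) :
    packingNumber r F = packingNumberAux r F := rfl

theorem packing_number_product_bound
    {X : Type*} [MetricSpace X] (x : X) (R : ℝ) (k : ℕ) (hk : 1 ≤ k)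
    (r : ℕ → ℝ) (hpos : 0 < r k) (hlt : ∀ j, 1 ≤ j → j < k → r (j + 1) < r j)
    (hR : r 1 < R) :
    packingNumber (r 1) (closedBall x (R - r 1)) *
        ∏ j ∈ Finset.Ico 1 k, ⨅ y : X, packingNumber (r (j + 1)) (closedBall y (r j - r (j + 1)))
      ≤ packingNumber (r k) (closedBall x R) := by
  simp only [packingNumber_eq_aux]
  have hle : ∀ d j, 1 ≤ j → j + d = k → r k ≤ r j := by
    intro d
    induction d with
    | zero =>
      intro j h1 h2
      have : j = k := by omega
      simp [this]
    | succ d ih =>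
      intro j h1 h2
      have hj : r (j + 1) < r j := hlt j h1 (by omega)
      have := ih (j + 1) (by omega) (by omega)
      linarith
  have hpos' : ∀ j, 1 ≤ j → j ≤ k → 0 < r j := fun j h1 h2 =>
    lt_of_lt_of_le hpos (hle (k - j) j h1 (by omega))
  have claim : ∀ K, 1 ≤ K → K ≤ k →
      packingNumberAux (r 1) (closedBall x (R - r 1)) *
        ∏ j ∈ Finset.Ico 1 K, ⨅ y : X,
          packingNumberAux (r (j + 1)) (closedBall y (r j - r (j + 1)))
      ≤ packingNumberAux (r K) (closedBall x (R - r K)) := by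
    intro K hK
    induction K, hK using Nat.le_induction with
    | base => intro _; simp
    | succ K hK ih =>
      intro hK1
      have ihle := ih (by omega)
      rw [Finset.prod_Ico_succ_top hK, ← mul_assoc]
      calc packingNumberAux (r 1) (closedBall x (R - r 1)) *
            (∏ j ∈ Finset.Ico 1 K, ⨅ y : X,
              packingNumberAux (r (j + 1)) (closedBall y (r j - r (j + 1)))) *
            (⨅ y : X, packingNumberAux (r (K + 1)) (closedBall y (r K - r (K + 1))))
          ≤ packingNumberAux (r K) (closedBall x (R - r K)) *
            (⨅ y : X, packingNumberAux (r (K + 1)) (closedBall y (r K - r (K + 1)))) :=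
          mul_le_mul_left ihle _
        _ ≤ packingNumberAux (r (K + 1)) (closedBall x (R - r K + (r K - r (K + 1)))) :=
          packing_keyAux x (R - r K) (r K) (r (K + 1))
            (le_of_lt (hpos' (K + 1) (by omega) hK1))
            (le_of_lt (hlt K hK (by omega)))
        _ = packingNumberAux (r (K + 1)) (closedBall x (R - r (K + 1))) := by ring_nf
  calc _ ≤ packingNumberAux (r k) (closedBall x (R - r k)) := claim k hk le_rfl
    _ ≤ packingNumberAux (r k) (closedBall x R) :=
      packingNumberAux_mono (closedBall_subset_closedBall (by linarith))
end

section
/- Let \mu be a compactly supported Borel probability measure with finite quasi-upper Assouad dimension. Then for every \theta \in (0,1): the \leq-version upper Assouad spectrum satisfies \overline{dim}_A^{\leq\theta}\mu = sup_{0<\psi\leq\theta} \overline{dim}_A^{=\psi}\mu, and the \leq-version lower Assouad spectrum satisfies \underline{dim}_A^{\leq\theta}\mu = inf_{0<\psi\leq\theta} \underline{dim}_A^{=\psi}\mu. -/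
open MeasureTheory Metric Set
open scoped ENNReal

def upperHSet {X : Type*} [MetricSpace X] [MeasurableSpace X] (μ : Measure X) (δ : ℝ) : Set ℝ :=
  {s | 0 ≤ s ∧ ∃ c₁ > (0:ℝ), ∃ c₂ > (0:ℝ), ∀ x ∈ msupp μ, ∀ r R : ℝ,
    0 < r → 0 < R → r ≤ R ^ (1 + δ) → R ^ (1 + δ) ≤ c₁ →
    (μ (ball x R)).toReal ≤ c₂ * (R / r) ^ s * (μ (ball x r)).toReal}

/-- The "=θ" upper Assouad spectrum of a measure. -/
noncomputable def upperEq {X : Type*} [MetricSpace X] [MeasurableSpace X]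
    (μ : Measure X) (θ : ℝ) : ℝ :=
  sInf {s | 0 ≤ s ∧ ∃ c > (0:ℝ), ∃ R₀ > (0:ℝ), ∀ x ∈ msupp μ, ∀ R : ℝ, 0 < R → R ≤ R₀ →
    (μ (ball x R)).toReal ≤ c * (R ^ (1 - 1 / θ)) ^ s * (μ (ball x (R ^ (1 / θ)))).toReal}

/-- The "=θ" lower Assouad spectrum of a measure. -/
noncomputable def lowerEq {X : Type*} [MetricSpace X] [MeasurableSpace X]
    (μ : Measure X) (θ : ℝ) : ℝ :=
  sSup {s | 0 ≤ s ∧ ∃ c > (0:ℝ), ∃ R₀ > (0:ℝ), ∀ x ∈ msupp μ, ∀ R : ℝ, 0 < R → R ≤ R₀ →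
    c * (R ^ (1 - 1 / θ)) ^ s * (μ (ball x (R ^ (1 / θ)))).toReal ≤ (μ (ball x R)).toReal}

/-! The inequalities `⨆ upperEq ≤ sInf upperHSet` and `sSup lowerHSet ≤ ⨅ lowerEq` are immediate:
a bound for all `r ≤ R^(1/θ)` specialises to `r = R^(1/ψ)` when `ψ ≤ θ`; for the lower spectrum
the sets `lowerEqSet` are bounded because a lower bound at exponent `s` and an upper bound at
exponent `s'` at the same point of the support force `s ≤ s'`.

For the converse, write `r = R^t` with `t ≥ T = 1/θ`. On the window `t ∈ [T, T²]`, finitely many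
`=ψ` bounds at a grid of ratios with mesh `η` hold uniformly, and a single quasi-Assouad step at
scale `η` moves from a grid ratio to `t` at the price of an exponent error `O(η · dim_qA μ)`.
Enlarging (for the lower spectrum: shrinking) the exponent slightly absorbs both this error and
the multiplicative constant, leaving a bound with constant `1`. Such bounds compose exactly,
`R ↦ R^T ↦ (R^T)^(t/T)`, so the window bound propagates to every `t ≥ T`. -/

open Filter Topology

lemma tendsto_rpow_nhdsGT_zero {p : ℝ} (hp : 0 < p) :
    Tendsto (fun R : ℝ => R ^ p) (𝓝[>] 0) (𝓝 0) := by
  simpa [Real.zero_rpow hp.ne'] using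
    (Real.continuousAt_rpow_const 0 p (Or.inr hp.le)).tendsto.mono_left nhdsWithin_le_nhds

lemma eventually_mul_rpow_lt {p : ℝ} (hp : 0 < p) (C : ℝ) {c : ℝ} (hc : 0 < c) :
    ∀ᶠ R in 𝓝[>] 0, C * R ^ p < c := by
  have h := (tendsto_rpow_nhdsGT_zero hp).const_mul C
  rw [mul_zero] at h
  exact h.eventually (gt_mem_nhds hc)

lemma nonpos_of_eventually_one_le_mul_rpow {K p : ℝ} (h : ∀ᶠ R in 𝓝[>] 0, 1 ≤ K * R ^ p) :
    p ≤ 0 := by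
  by_contra! hp
  obtain ⟨R, h1, h2⟩ := (h.and (eventually_mul_rpow_lt hp K one_pos)).exists
  linarith

lemma eventually_forall_rpow {p : ℝ → Prop} (h : ∀ᶠ ρ in 𝓝[>] 0, p ρ) :
    ∀ᶠ R in 𝓝[>] 0, 0 < R ∧ R < 1 ∧ ∀ a : ℝ, 1 ≤ a → p (R ^ a) := by
  obtain ⟨ρ, hρ, hp⟩ := mem_nhdsGT_iff_exists_Ioc_subset.1 h
  filter_upwards [Ioo_mem_nhdsGT (lt_min hρ one_pos)] with R ⟨hR0, hR⟩
  refine ⟨hR0, hR.trans_le (min_le_right _ _), fun a ha => hp ⟨by positivity, ?_⟩⟩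
  calc R ^ a ≤ R ^ (1 : ℝ) :=
        Real.rpow_le_rpow_of_exponent_ge hR0 (hR.le.trans (min_le_right _ _)) ha
    _ ≤ ρ := by rw [Real.rpow_one]; exact hR.le.trans (min_le_left _ _)

lemma mul_rpow_le_rpow_of_mul_rpow_le_one {R C x y p : ℝ} (hR : 0 < R) (hR1 : R ≤ 1) (hC : 0 ≤ C)
    (hCp : C * R ^ p ≤ 1) (hp : p ≤ x - y) : C * R ^ x ≤ R ^ y :=
  calc C * R ^ x = C * R ^ (x - y) * R ^ y := by
        rw [mul_assoc, ← Real.rpow_add hR, sub_add_cancel]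
    _ ≤ C * R ^ p * R ^ y :=
        mul_le_mul_of_nonneg_right
          (mul_le_mul_of_nonneg_left (Real.rpow_le_rpow_of_exponent_ge hR hR1 hp) hC)
          (Real.rpow_nonneg hR.le y)
    _ ≤ R ^ y := mul_le_of_le_one_left (Real.rpow_nonneg hR.le y) hCp

lemma div_rpow_rpow_eq {R : ℝ} (hR : 0 < R) (t s : ℝ) : (R / R ^ t) ^ s = R ^ ((1 - t) * s) := by
  rw [Real.rpow_mul hR.le, Real.rpow_sub hR, Real.rpow_one]

section MassRatio

variable {X : Type*} [MetricSpace X] [MeasurableSpace X] (μ : Measure X)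

noncomputable def ballMass (x : X) (r : ℝ) : ℝ := (μ (ball x r)).toReal

/- Lower bounds `c R^e μ(B(x, R^t)) ≤ μ(B(x, R))` are expressed as
`MassRatioLE μ (R ^ t) R (c⁻¹ * R ^ (-e))`, so that both spectra use one composable notion. -/
def MassRatioLE (R r K : ℝ) : Prop := ∀ x ∈ msupp μ, ballMass μ x R ≤ K * ballMass μ x r

variable {μ}

lemma ballMass_nonneg (x : X) (r : ℝ) : 0 ≤ ballMass μ x r := ENNReal.toReal_nonneg

lemma ballMass_mono [IsFiniteMeasure μ] (x : X) {r r' : ℝ} (h : r ≤ r') :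
    ballMass μ x r ≤ ballMass μ x r' :=
  ENNReal.toReal_mono (measure_ne_top μ _) (measure_mono (ball_subset_ball h))

lemma ballMass_pos [IsFiniteMeasure μ] {x : X} (hx : x ∈ msupp μ) {r : ℝ} (hr : 0 < r) :
    0 < ballMass μ x r :=
  ENNReal.toReal_pos (hx r hr).ne' (measure_ne_top μ _)

namespace MassRatioLE

variable {R ρ r K K' : ℝ}

lemma trans (h₁ : MassRatioLE μ R ρ K) (h₂ : MassRatioLE μ ρ r K') (hK : 0 ≤ K) :
    MassRatioLE μ R r (K * K') := fun x hx =>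
  (h₁ x hx).trans <| by rw [mul_assoc]; exact mul_le_mul_of_nonneg_left (h₂ x hx) hK

lemma mono_const (h : MassRatioLE μ R r K) (hK : K ≤ K') : MassRatioLE μ R r K' := fun x hx =>
  (h x hx).trans (mul_le_mul_of_nonneg_right hK (ballMass_nonneg x r))

lemma mono_right [IsFiniteMeasure μ] (h : MassRatioLE μ R r K) (hK : 0 ≤ K) {r' : ℝ}
    (hr : r ≤ r') : MassRatioLE μ R r' K := fun x hx =>
  (h x hx).trans (mul_le_mul_of_nonneg_left (ballMass_mono x hr) hK)

lemma one_le [IsFiniteMeasure μ] (h : MassRatioLE μ r r K) {x : X} (hx : x ∈ msupp μ)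
    (hr : 0 < r) : 1 ≤ K :=
  (le_mul_iff_one_le_left (ballMass_pos hx hr)).1 (h x hx)

end MassRatioLE

end MassRatio

section Characterizations

lemma exists_forall_Ioc_iff_eventually {p : ℝ → Prop} :
    (∃ R₀ > (0 : ℝ), ∀ R : ℝ, 0 < R → R ≤ R₀ → p R) ↔ ∀ᶠ R in 𝓝[>] 0, p R := by
  rw [Filter.Eventually, mem_nhdsGT_iff_exists_Ioc_subset]
  exact exists_congr fun R₀ => and_congr_right fun _ =>
    ⟨fun h R hR => h R hR.1 hR.2, fun h R h₀ h₁ => h ⟨h₀, h₁⟩⟩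

lemma exists_forall_rpow_iff_eventually {δ : ℝ} (hδ : -1 < δ) {Q : ℝ → ℝ → Prop} :
    (∃ c₁ > (0 : ℝ), ∀ r R : ℝ, 0 < r → 0 < R → r ≤ R ^ (1 + δ) → R ^ (1 + δ) ≤ c₁ → Q R r) ↔
      ∀ᶠ R in 𝓝[>] 0, ∀ t, 1 + δ ≤ t → Q R (R ^ t) := by
  have hδ' : 0 < 1 + δ := by linarith
  constructor
  · rintro ⟨c₁, hc₁, H⟩
    filter_upwards [self_mem_nhdsWithin, Ioo_mem_nhdsGT one_pos,
      (tendsto_rpow_nhdsGT_zero hδ').eventually (ge_mem_nhds hc₁)] with R hR ⟨_, hR1⟩ hRc t ht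
    exact H _ R (Real.rpow_pos_of_pos hR t) hR
      (Real.rpow_le_rpow_of_exponent_ge hR hR1.le ht) hRc
  · intro h
    obtain ⟨ρ, hρ, hsub⟩ := mem_nhdsGT_iff_exists_Ioc_subset.1 h
    set ρ' := min ρ (1 / 2)
    have hρ' : 0 < ρ' := lt_min hρ one_half_pos
    refine ⟨ρ' ^ (1 + δ), by positivity, fun r R hr hR hrR hRc => ?_⟩
    have hRρ : R ≤ ρ' := (Real.rpow_le_rpow_iff hR.le hρ'.le hδ').1 hRc
    have hR1 : R < 1 := by linarith [min_le_right ρ (1 / 2)]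
    have hRr : R ^ Real.logb R r = r := Real.rpow_logb hR hR1.ne hr
    have ht : 1 + δ ≤ Real.logb R r :=
      (Real.rpow_le_rpow_left_iff_of_base_lt_one hR hR1).1 (hRr.symm ▸ hrR)
    simpa only [hRr] using hsub ⟨hR, hRρ.trans (min_le_left _ _)⟩ _ ht

lemma mul_rpow_mul_le_iff {c R a b t s : ℝ} (hc : 0 < c) (hR : 0 < R) :
    c * R ^ ((1 - t) * s) * a ≤ b ↔ a ≤ c⁻¹ * R ^ ((t - 1) * s) * b := by
  have h : c⁻¹ * R ^ ((t - 1) * s) = (c * R ^ ((1 - t) * s))⁻¹ := by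
    rw [mul_inv, ← Real.rpow_neg hR.le]; ring_nf
  rw [h, le_inv_mul_iff₀ (by positivity)]

variable {X : Type*} [MetricSpace X] [MeasurableSpace X] (μ : Measure X)

def upperEqSet (θ : ℝ) : Set ℝ :=
  {s | 0 ≤ s ∧ ∃ c > (0:ℝ), ∃ R₀ > (0:ℝ), ∀ x ∈ msupp μ, ∀ R : ℝ, 0 < R → R ≤ R₀ →
    (μ (ball x R)).toReal ≤ c * (R ^ (1 - 1 / θ)) ^ s * (μ (ball x (R ^ (1 / θ)))).toReal}

def lowerEqSet (θ : ℝ) : Set ℝ :=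
  {s | 0 ≤ s ∧ ∃ c > (0:ℝ), ∃ R₀ > (0:ℝ), ∀ x ∈ msupp μ, ∀ R : ℝ, 0 < R → R ≤ R₀ →
    c * (R ^ (1 - 1 / θ)) ^ s * (μ (ball x (R ^ (1 / θ)))).toReal ≤ (μ (ball x R)).toReal}

lemma upperEq_eq_sInf (θ : ℝ) : upperEq μ θ = sInf (upperEqSet μ θ) := rfl

lemma lowerEq_eq_sSup (θ : ℝ) : lowerEq μ θ = sSup (lowerEqSet μ θ) := rfl

variable {μ}

lemma mem_upperHSet_iff {δ s : ℝ} (hδ : -1 < δ) : s ∈ upperHSet μ δ ↔ 0 ≤ s ∧ ∃ C > 0,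
    ∀ᶠ R in 𝓝[>] 0, ∀ t, 1 + δ ≤ t → MassRatioLE μ R (R ^ t) (C * R ^ ((1 - t) * s)) := by
  have key : ∀ C : ℝ, (∃ c₁ > (0 : ℝ), ∀ r R : ℝ, 0 < r → 0 < R → r ≤ R ^ (1 + δ) →
      R ^ (1 + δ) ≤ c₁ → ∀ x ∈ msupp μ, ballMass μ x R ≤ C * (R / r) ^ s * ballMass μ x r) ↔
      ∀ᶠ R in 𝓝[>] 0, ∀ t, 1 + δ ≤ t → MassRatioLE μ R (R ^ t) (C * R ^ ((1 - t) * s)) := by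
    intro C
    rw [exists_forall_rpow_iff_eventually hδ]
    refine eventually_congr (eventually_mem_nhdsWithin.mono fun R (hR : 0 < R) => ?_)
    simp only [div_rpow_rpow_eq hR, MassRatioLE]
  constructor
  · rintro ⟨hs, c₁, hc₁, C, hC, H⟩
    exact ⟨hs, C, hC, (key C).1 ⟨c₁, hc₁, fun r R hr hR h₁ h₂ x hx => H x hx r R hr hR h₁ h₂⟩⟩
  · rintro ⟨hs, C, hC, h⟩
    obtain ⟨c₁, hc₁, H⟩ := (key C).2 h
    exact ⟨hs, c₁, hc₁, C, hC, fun x hx r R hr hR h₁ h₂ => H r R hr hR h₁ h₂ x hx⟩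

lemma mem_lowerHSet_iff {δ s : ℝ} (hδ : -1 < δ) : s ∈ lowerHSet μ δ ↔ 0 ≤ s ∧ ∃ c > 0,
    ∀ᶠ R in 𝓝[>] 0, ∀ t, 1 + δ ≤ t → MassRatioLE μ (R ^ t) R (c⁻¹ * R ^ ((t - 1) * s)) := by
  have key : ∀ c : ℝ, 0 < c → ((∃ c₁ > (0 : ℝ), ∀ r R : ℝ, 0 < r → 0 < R → r ≤ R ^ (1 + δ) →
      R ^ (1 + δ) ≤ c₁ → ∀ x ∈ msupp μ, c * (R / r) ^ s * ballMass μ x r ≤ ballMass μ x R) ↔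
      ∀ᶠ R in 𝓝[>] 0, ∀ t, 1 + δ ≤ t → MassRatioLE μ (R ^ t) R (c⁻¹ * R ^ ((t - 1) * s))) := by
    intro c hc
    rw [exists_forall_rpow_iff_eventually hδ]
    refine eventually_congr (eventually_mem_nhdsWithin.mono fun R (hR : 0 < R) => ?_)
    simp only [div_rpow_rpow_eq hR, MassRatioLE, mul_rpow_mul_le_iff hc hR]
  constructor
  · rintro ⟨hs, c₁, hc₁, c, hc, H⟩
    exact ⟨hs, c, hc, (key c hc).1 ⟨c₁, hc₁, fun r R hr hR h₁ h₂ x hx => H x hx r R hr hR h₁ h₂⟩⟩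
  · rintro ⟨hs, c, hc, h⟩
    obtain ⟨c₁, hc₁, H⟩ := (key c hc).2 h
    exact ⟨hs, c₁, hc₁, c, hc, fun x hx r R hr hR h₁ h₂ => H r R hr hR h₁ h₂ x hx⟩

lemma mem_upperEqSet_iff {θ s : ℝ} : s ∈ upperEqSet μ θ ↔ 0 ≤ s ∧ ∃ C > 0,
    ∀ᶠ R in 𝓝[>] 0, MassRatioLE μ R (R ^ (1 / θ)) (C * R ^ ((1 - 1 / θ) * s)) := by
  have key : ∀ C : ℝ, (∃ R₀ > (0 : ℝ), ∀ R : ℝ, 0 < R → R ≤ R₀ → ∀ x ∈ msupp μ,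
      ballMass μ x R ≤ C * (R ^ (1 - 1 / θ)) ^ s * ballMass μ x (R ^ (1 / θ))) ↔
      ∀ᶠ R in 𝓝[>] 0, MassRatioLE μ R (R ^ (1 / θ)) (C * R ^ ((1 - 1 / θ) * s)) := by
    intro C
    rw [exists_forall_Ioc_iff_eventually]
    refine eventually_congr (eventually_mem_nhdsWithin.mono fun R (hR : 0 < R) => ?_)
    simp only [← Real.rpow_mul hR.le, MassRatioLE]
  constructor
  · rintro ⟨hs, C, hC, R₀, hR₀, H⟩
    exact ⟨hs, C, hC, (key C).1 ⟨R₀, hR₀, fun R hR h x hx => H x hx R hR h⟩⟩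
  · rintro ⟨hs, C, hC, h⟩
    obtain ⟨R₀, hR₀, H⟩ := (key C).2 h
    exact ⟨hs, C, hC, R₀, hR₀, fun x hx R hR h => H R hR h x hx⟩

lemma mem_lowerEqSet_iff {θ s : ℝ} : s ∈ lowerEqSet μ θ ↔ 0 ≤ s ∧ ∃ c > 0,
    ∀ᶠ R in 𝓝[>] 0, MassRatioLE μ (R ^ (1 / θ)) R (c⁻¹ * R ^ ((1 / θ - 1) * s)) := by
  have key : ∀ c : ℝ, 0 < c → ((∃ R₀ > (0 : ℝ), ∀ R : ℝ, 0 < R → R ≤ R₀ → ∀ x ∈ msupp μ,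
      c * (R ^ (1 - 1 / θ)) ^ s * ballMass μ x (R ^ (1 / θ)) ≤ ballMass μ x R) ↔
      ∀ᶠ R in 𝓝[>] 0, MassRatioLE μ (R ^ (1 / θ)) R (c⁻¹ * R ^ ((1 / θ - 1) * s))) := by
    intro c hc
    rw [exists_forall_Ioc_iff_eventually]
    refine eventually_congr (eventually_mem_nhdsWithin.mono fun R (hR : 0 < R) => ?_)
    simp only [← Real.rpow_mul hR.le, MassRatioLE, mul_rpow_mul_le_iff hc hR]
  constructor
  · rintro ⟨hs, c, hc, R₀, hR₀, H⟩
    exact ⟨hs, c, hc, (key c hc).1 ⟨R₀, hR₀, fun R hR h x hx => H x hx R hR h⟩⟩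
  · rintro ⟨hs, c, hc, h⟩
    obtain ⟨R₀, hR₀, H⟩ := (key c hc).2 h
    exact ⟨hs, c, hc, R₀, hR₀, fun x hx R hR h => H R hR h x hx⟩

end Characterizations

section SpectrumSets

variable {X : Type*} [MetricSpace X] [MeasurableSpace X] {μ : Measure X}

lemma upperHSet_subset_upperEqSet {δ ψ : ℝ} (hδ : -1 < δ) (hψ : 1 + δ ≤ 1 / ψ) :
    upperHSet μ δ ⊆ upperEqSet μ ψ := fun _ hs =>
  let ⟨hs, C, hC, h⟩ := (mem_upperHSet_iff hδ).1 hs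
  mem_upperEqSet_iff.2 ⟨hs, C, hC, h.mono fun _ hR => hR _ hψ⟩

lemma lowerHSet_subset_lowerEqSet {δ ψ : ℝ} (hδ : -1 < δ) (hψ : 1 + δ ≤ 1 / ψ) :
    lowerHSet μ δ ⊆ lowerEqSet μ ψ := fun _ hs =>
  let ⟨hs, c, hc, h⟩ := (mem_lowerHSet_iff hδ).1 hs
  mem_lowerEqSet_iff.2 ⟨hs, c, hc, h.mono fun _ hR => hR _ hψ⟩

lemma eventually_massRatioLE_of_upperEq_lt {ψ S : ℝ} (hψ0 : 0 < ψ) (hψ1 : ψ ≤ 1)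
    (hne : (upperEqSet μ ψ).Nonempty) (h : upperEq μ ψ < S) :
    ∀ᶠ C in atTop, ∀ᶠ R in 𝓝[>] 0,
      MassRatioLE μ R (R ^ (1 / ψ)) (C * R ^ ((1 - 1 / ψ) * S)) := by
  rw [upperEq_eq_sInf] at h
  obtain ⟨s, hs, hsS⟩ := exists_lt_of_csInf_lt hne h
  obtain ⟨-, C, hC0, hC⟩ := mem_upperEqSet_iff.1 hs
  have hψ : 1 ≤ 1 / ψ := by rw [le_div_iff₀ hψ0]; linarith
  filter_upwards [eventually_ge_atTop C] with C' hC'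
  filter_upwards [hC, Ioo_mem_nhdsGT one_pos] with R hR ⟨hR0, hR1⟩
  refine hR.mono_const (mul_le_mul hC' ?_ (by positivity) (by linarith))
  exact Real.rpow_le_rpow_of_exponent_ge hR0 hR1.le
    (mul_le_mul_of_nonpos_left hsS.le (by linarith))

lemma eventually_massRatioLE_of_lt_lowerEq {ψ S : ℝ} (hψ0 : 0 < ψ) (hψ1 : ψ ≤ 1) (hS : 0 ≤ S)
    (h : S < lowerEq μ ψ) :
    ∀ᶠ C in atTop, ∀ᶠ R in 𝓝[>] 0,
      MassRatioLE μ (R ^ (1 / ψ)) R (C * R ^ ((1 / ψ - 1) * S)) := by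
  have hne : (lowerEqSet μ ψ).Nonempty := by
    by_contra hne
    rw [not_nonempty_iff_eq_empty] at hne
    rw [lowerEq_eq_sSup, hne, Real.sSup_empty] at h
    linarith
  obtain ⟨s, hs, hSs⟩ := exists_lt_of_lt_csSup hne h
  obtain ⟨-, c, hc, hC⟩ := mem_lowerEqSet_iff.1 hs
  have hψ : 1 ≤ 1 / ψ := by rw [le_div_iff₀ hψ0]; linarith
  filter_upwards [eventually_ge_atTop c⁻¹] with C hC'
  filter_upwards [hC, Ioo_mem_nhdsGT one_pos] with R hR ⟨hR0, hR1⟩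
  refine hR.mono_const (mul_le_mul hC' ?_ (by positivity) (by linarith [inv_pos.2 hc]))
  exact Real.rpow_le_rpow_of_exponent_ge hR0 hR1.le
    (mul_le_mul_of_nonneg_left hSs.le (by linarith))

lemma le_of_mem_lowerEqSet_of_mem_upperHSet [IsFiniteMeasure μ] {x₀ : X} (hx₀ : x₀ ∈ msupp μ)
    {ψ s s' : ℝ} (hψ0 : 0 < ψ) (hψ1 : ψ < 1) (hs : s ∈ lowerEqSet μ ψ)
    (hs' : s' ∈ upperHSet μ (1 / ψ - 1)) : s ≤ s' := by
  have hψ : 1 < 1 / ψ := by rw [lt_div_iff₀ hψ0]; linarith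
  obtain ⟨-, c, hc, hlow⟩ := mem_lowerEqSet_iff.1 hs
  obtain ⟨-, C, hC, hup⟩ := (mem_upperHSet_iff (by linarith)).1 hs'
  have hexp : (1 / ψ - 1) * (s - s') ≤ 0 := by
    refine nonpos_of_eventually_one_le_mul_rpow (K := c⁻¹ * C) ?_
    filter_upwards [hlow, hup, self_mem_nhdsWithin] with R hl hu (hR : 0 < R)
    have h := (hl.trans (hu _ (by linarith)) (by positivity)).one_le hx₀ (by positivity)
    calc 1 ≤ c⁻¹ * R ^ ((1 / ψ - 1) * s) * (C * R ^ ((1 - 1 / ψ) * s')) := h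
      _ = c⁻¹ * C * R ^ ((1 / ψ - 1) * (s - s')) := by
        rw [mul_mul_mul_comm, ← Real.rpow_add hR]; ring_nf
  nlinarith

lemma sSup_lowerHSet_of_msupp_eq_empty (h : msupp μ = ∅) (δ : ℝ) :
    sSup (lowerHSet μ δ) = 0 := by
  have : lowerHSet μ δ = Ici 0 := by ext; simp [lowerHSet, h, exists_gt]
  rw [this, Real.sSup_of_not_bddAbove (not_bddAbove_Ici 0)]

lemma lowerEq_of_msupp_eq_empty (h : msupp μ = ∅) (ψ : ℝ) : lowerEq μ ψ = 0 := by
  have : lowerEqSet μ ψ = Ici 0 := by ext; simp [lowerEqSet, h, exists_gt]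
  rw [lowerEq_eq_sSup, this, Real.sSup_of_not_bddAbove (not_bddAbove_Ici 0)]

end SpectrumSets

lemma eventually_forall_ge_of_window {P : ℝ → ℝ → Prop} {T : ℝ} (hT : 1 < T)
    (hmul : ∀ R t₁ t₂, 0 < R → P R t₁ → P (R ^ t₁) t₂ → P R (t₁ * t₂))
    (hwin : ∀ᶠ R in 𝓝[>] 0, ∀ t ∈ Icc T (T ^ 2), P R t) :
    ∀ᶠ R in 𝓝[>] 0, ∀ t, T ≤ t → P R t := by
  have key : ∀ n : ℕ, ∀ R, 0 < R → (∀ a : ℝ, 1 ≤ a → ∀ t ∈ Icc T (T ^ 2), P (R ^ a) t) →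
      ∀ t ∈ Icc T (T ^ (n + 2)), P R t := by
    intro n
    induction n with
    | zero => intro R _ h t ht; simpa using h 1 le_rfl t ht
    | succ n ih =>
      intro R hR h t ⟨hTt, htn⟩
      rcases le_or_gt t (T ^ 2) with ht | ht
      · simpa using h 1 le_rfl t ⟨hTt, ht⟩
      have hRT : P R T := by simpa using h 1 le_rfl T ⟨le_rfl, by nlinarith⟩
      have hT0 : 0 < T := by linarith
      have hRTt : P (R ^ T) (t / T) := by
        refine ih (R ^ T) (by positivity) (fun a ha s hs => ?_) (t / T) ⟨?_, ?_⟩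
        · rw [← Real.rpow_mul hR.le]; exact h _ (by nlinarith) s hs
        · rw [le_div_iff₀ hT0]; nlinarith
        · rw [div_le_iff₀ hT0, ← pow_succ]; exact htn
      simpa [mul_div_cancel₀ t hT0.ne'] using hmul R T (t / T) hR hRT hRTt
  filter_upwards [eventually_forall_rpow hwin] with R ⟨hR, _, h⟩ t ht
  obtain ⟨n, hn⟩ := pow_unbounded_of_one_lt t hT
  exact key n R hR h t ⟨ht, hn.le.trans (pow_le_pow_right₀ hT.le (by omega))⟩

lemma exists_grid_le_le {T T' h t : ℝ} (hh : 0 < h) (hTt : T ≤ t) (htT' : t ≤ T') :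
    ∃ i ∈ Finset.range (⌈(T' - T) / h⌉₊ + 1), T + i * h ≤ t ∧ t ≤ T + i * h + h := by
  have hx : 0 ≤ (t - T) / h := div_nonneg (by linarith) hh.le
  refine ⟨⌊(t - T) / h⌋₊, Finset.mem_range_succ_iff.2 ?_, ?_, ?_⟩
  · exact (Nat.floor_le_floor (by gcongr)).trans (Nat.floor_le_ceil _)
  · have := Nat.floor_le hx
    rw [le_div_iff₀ hh] at this; linarith
  · have := Nat.lt_floor_add_one ((t - T) / h)
    rw [div_lt_iff₀ hh] at this; linarith

lemma exists_grid_ge_le {T T' h t : ℝ} (hh : 0 < h) (hTt : T ≤ t) (htT' : t ≤ T') :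
    ∃ i ∈ Finset.range (⌈(T' - T) / h⌉₊ + 1), t ≤ T + i * h ∧ T + i * h ≤ t + h := by
  have hx : 0 ≤ (t - T) / h := div_nonneg (by linarith) hh.le
  refine ⟨⌈(t - T) / h⌉₊, Finset.mem_range_succ_iff.2 (Nat.ceil_mono (by gcongr)), ?_, ?_⟩
  · have := Nat.le_ceil ((t - T) / h)
    rw [div_le_iff₀ hh] at this; linarith
  · have := mul_lt_mul_of_pos_right (Nat.ceil_lt_add_one hx) hh
    rw [add_mul, div_mul_cancel₀ _ hh.ne'] at this; linarith

section Interpolation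

variable {X : Type*} [MetricSpace X] [MeasurableSpace X] {μ : Measure X}

/- `η` is chosen, before the quasi-Assouad exponent `s' ≤ D` at scale `η` is picked, so that the
exponent lost in one step from `R^u` to `R^v`, `u η s'`, stays below `(T - 1) ε` for `u ≤ T²`.
This is where the finiteness of the quasi-Assouad dimension is used. -/
lemma exists_quasiAssouad_step [IsFiniteMeasure μ] {T ε D : ℝ} (hT : 1 < T) (hε : 0 < ε)
    (hD : ∀ δ : ℝ, 0 < δ → ∃ s ∈ upperHSet μ δ, s ≤ D) :
    ∃ η > 0, ∃ s' C : ℝ, 0 ≤ s' ∧ 0 ≤ C ∧ T ^ 2 * η * s' ≤ (T - 1) * ε ∧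
      ∀ᶠ R in 𝓝[>] 0, 0 < R ∧ R < 1 ∧ ∀ u v : ℝ, 1 ≤ u → v ≤ u * (1 + η) →
        MassRatioLE μ (R ^ u) (R ^ v) (C * R ^ (-(u * η * s'))) := by
  have hD0 : 0 ≤ D := by
    obtain ⟨s, hs, hsD⟩ := hD 1 one_pos
    exact ((mem_upperHSet_iff (by norm_num)).1 hs).1.trans hsD
  set η := (T - 1) * ε / (T ^ 2 * (D + 1))
  have hη : 0 < η := div_pos (mul_pos (by linarith) hε) (by positivity)
  obtain ⟨s', hs', hs'D⟩ := hD η hη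
  obtain ⟨hs'0, C, hC, hq⟩ := (mem_upperHSet_iff (by linarith)).1 hs'
  refine ⟨η, hη, s', C, hs'0, hC.le, ?_, ?_⟩
  · calc T ^ 2 * η * s' ≤ T ^ 2 * η * (D + 1) := by gcongr; linarith
      _ = (T - 1) * ε := by simp only [η]; field_simp
  · filter_upwards [eventually_forall_rpow (hq.mono fun ρ h => h _ le_rfl)]
      with R ⟨hR, hR1, h⟩
    refine ⟨hR, hR1, fun u v hu hv => ?_⟩
    have := h u hu
    rw [← Real.rpow_mul hR.le, ← Real.rpow_mul hR.le] at this
    refine (this.mono_right (by positivity) ?_).mono_const (le_of_eq ?_)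
    · exact Real.rpow_le_rpow_of_exponent_ge hR hR1.le hv
    · ring_nf

/- The grid ratios `a = T + i T η` are finitely many, so their `=1/a` bounds hold with a common
constant; every `t ∈ [T, T²]` lies within a factor `1 + η` of one of them, and one quasi-Assouad
step bridges the gap. -/
lemma exists_window_upper {T S S' η s' C₂ : ℝ} (hT : 1 < T) (hS : 0 ≤ S) (hη : 0 < η)
    (hs' : 0 ≤ s') (hC₂ : 0 ≤ C₂) (hslack : T ^ 2 * η * s' ≤ (T - 1) * (S' - S))
    (hstep : ∀ᶠ R in 𝓝[>] 0, 0 < R ∧ R < 1 ∧ ∀ u v : ℝ, 1 ≤ u → v ≤ u * (1 + η) →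
      MassRatioLE μ (R ^ u) (R ^ v) (C₂ * R ^ (-(u * η * s'))))
    (heq : ∀ t, T ≤ t → ∀ᶠ C in atTop, ∀ᶠ R in 𝓝[>] 0,
      MassRatioLE μ R (R ^ t) (C * R ^ ((1 - t) * S))) :
    ∃ C ≥ 0, ∀ᶠ R in 𝓝[>] 0, ∀ t ∈ Icc T (T ^ 2),
      MassRatioLE μ R (R ^ t) (C * R ^ ((1 - t) * S')) := by
  have hh : 0 < T * η := mul_pos (by linarith) hη
  set grid := Finset.range (⌈(T ^ 2 - T) / (T * η)⌉₊ + 1)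
  obtain ⟨C, hC0, hC⟩ : ∃ C, 0 ≤ C ∧ ∀ i ∈ grid, ∀ᶠ R in 𝓝[>] 0,
      MassRatioLE μ R (R ^ (T + i * (T * η))) (C * R ^ ((1 - (T + i * (T * η))) * S)) :=
    ((eventually_ge_atTop 0).and ((eventually_all_finset grid).2 fun i _ =>
      heq _ (le_add_of_nonneg_right (by positivity)))).exists
  refine ⟨C * C₂, by positivity, ?_⟩
  filter_upwards [(eventually_all_finset grid).2 hC, hstep]
    with R hgrid ⟨hR, hR1, hstep⟩ t ⟨hTt, htT⟩
  obtain ⟨i, hi, hat, hta⟩ := exists_grid_le_le hh hTt htT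
  set a := T + i * (T * η)
  have hTa : T ≤ a := by nlinarith [i.cast_nonneg (α := ℝ)]
  have hSS' : 0 ≤ S' - S := (mul_nonneg_iff_of_pos_left (by linarith)).1
    ((by positivity : 0 ≤ T ^ 2 * η * s').trans hslack)
  have hchain := (hgrid i hi).trans (hstep a t (by linarith) (by nlinarith)) (by positivity)
  refine hchain.mono_const ?_
  rw [mul_mul_mul_comm, ← Real.rpow_add hR]
  refine mul_le_mul_of_nonneg_left (Real.rpow_le_rpow_of_exponent_ge hR hR1.le ?_) (by positivity)
  nlinarith [mul_le_mul_of_nonneg_right (show T - 1 ≤ t - 1 by linarith) hSS',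
    mul_le_mul_of_nonneg_right (hat.trans htT) (mul_nonneg hη.le hs')]

lemma exists_window_lower {T S S' η s' C₂ : ℝ} (hT : 1 < T) (hS : 0 ≤ S) (hη : 0 < η)
    (hs' : 0 ≤ s') (hC₂ : 0 ≤ C₂) (hslack : T ^ 2 * η * s' ≤ (T - 1) * (S - S'))
    (hstep : ∀ᶠ R in 𝓝[>] 0, 0 < R ∧ R < 1 ∧ ∀ u v : ℝ, 1 ≤ u → v ≤ u * (1 + η) →
      MassRatioLE μ (R ^ u) (R ^ v) (C₂ * R ^ (-(u * η * s'))))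
    (heq : ∀ t, T ≤ t → ∀ᶠ C in atTop, ∀ᶠ R in 𝓝[>] 0,
      MassRatioLE μ (R ^ t) R (C * R ^ ((t - 1) * S))) :
    ∃ C ≥ 0, ∀ᶠ R in 𝓝[>] 0, ∀ t ∈ Icc T (T ^ 2),
      MassRatioLE μ (R ^ t) R (C * R ^ ((t - 1) * S')) := by
  have hh : 0 < T * η := mul_pos (by linarith) hη
  set grid := Finset.range (⌈(T ^ 2 - T) / (T * η)⌉₊ + 1)
  obtain ⟨C, hC0, hC⟩ : ∃ C, 0 ≤ C ∧ ∀ i ∈ grid, ∀ᶠ R in 𝓝[>] 0,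
      MassRatioLE μ (R ^ (T + i * (T * η))) R (C * R ^ ((T + i * (T * η) - 1) * S)) :=
    ((eventually_ge_atTop 0).and ((eventually_all_finset grid).2 fun i _ =>
      heq _ (le_add_of_nonneg_right (by positivity)))).exists
  refine ⟨C₂ * C, by positivity, ?_⟩
  filter_upwards [(eventually_all_finset grid).2 hC, hstep]
    with R hgrid ⟨hR, hR1, hstep⟩ t ⟨hTt, htT⟩
  obtain ⟨i, hi, hta, hat⟩ := exists_grid_ge_le hh hTt htT
  set a := T + i * (T * η)
  have hSS' : 0 ≤ S - S' := (mul_nonneg_iff_of_pos_left (by linarith)).1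
    ((by positivity : 0 ≤ T ^ 2 * η * s').trans hslack)
  have hchain := (hstep t a (by linarith) (by nlinarith)).trans (hgrid i hi) (by positivity)
  refine hchain.mono_const ?_
  rw [mul_mul_mul_comm, ← Real.rpow_add hR]
  refine mul_le_mul_of_nonneg_left (Real.rpow_le_rpow_of_exponent_ge hR hR1.le ?_) (by positivity)
  nlinarith [mul_le_mul_of_nonneg_right (show T - 1 ≤ t - 1 by linarith) hSS',
    mul_le_mul_of_nonneg_right htT (mul_nonneg hη.le hs')]

/- The surplus `s - S'` in the exponent absorbs the constant of the window bound, and bounds with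
constant `1` compose exactly along `t = t₁ * t₂`. -/
lemma eventually_massRatioLE_upper [IsFiniteMeasure μ] {T S s D : ℝ} (hT : 1 < T) (hS : 0 ≤ S)
    (hSs : S < s)
    (hD : ∀ δ : ℝ, 0 < δ → ∃ s ∈ upperHSet μ δ, s ≤ D)
    (heq : ∀ t, T ≤ t → ∀ᶠ C in atTop, ∀ᶠ R in 𝓝[>] 0,
      MassRatioLE μ R (R ^ t) (C * R ^ ((1 - t) * S))) :
    ∀ᶠ R in 𝓝[>] 0, ∀ t, T ≤ t → MassRatioLE μ R (R ^ t) (R ^ ((1 - t) * s)) := by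
  obtain ⟨S', hSS', hS's⟩ := exists_between hSs
  obtain ⟨η, hη, s', C₂, hs', hC₂, hslack, hstep⟩ :=
    exists_quasiAssouad_step hT (sub_pos.2 hSS') hD
  obtain ⟨C, hC, hwin⟩ := exists_window_upper hT hS hη hs' hC₂ hslack hstep heq
  refine eventually_forall_ge_of_window hT (fun R t₁ t₂ hR h₁ h₂ => ?_) ?_
  · have := h₁.trans h₂ (by positivity)
    rw [← Real.rpow_mul hR.le, ← Real.rpow_mul hR.le, ← Real.rpow_add hR] at this
    convert this using 3; ring
  · filter_upwards [hwin, Ioo_mem_nhdsGT one_pos,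
      eventually_mul_rpow_lt (mul_pos (sub_pos.2 hT) (sub_pos.2 hS's)) C one_pos]
      with R hR ⟨hR0, hR1⟩ hCR t ht
    exact (hR t ht).mono_const
      (mul_rpow_le_rpow_of_mul_rpow_le_one hR0 hR1.le hC hCR.le (by
        nlinarith [mul_le_mul_of_nonneg_right (sub_le_sub_right ht.1 1) (sub_pos.2 hS's).le]))

lemma eventually_massRatioLE_lower [IsFiniteMeasure μ] {T S s D : ℝ} (hT : 1 < T) (hS : 0 ≤ S)
    (hs : s < S)
    (hD : ∀ δ : ℝ, 0 < δ → ∃ s ∈ upperHSet μ δ, s ≤ D)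
    (heq : ∀ t, T ≤ t → ∀ᶠ C in atTop, ∀ᶠ R in 𝓝[>] 0,
      MassRatioLE μ (R ^ t) R (C * R ^ ((t - 1) * S))) :
    ∀ᶠ R in 𝓝[>] 0, ∀ t, T ≤ t → MassRatioLE μ (R ^ t) R (R ^ ((t - 1) * s)) := by
  obtain ⟨S', hsS', hS'S⟩ := exists_between hs
  obtain ⟨η, hη, s', C₂, hs', hC₂, hslack, hstep⟩ :=
    exists_quasiAssouad_step hT (sub_pos.2 hS'S) hD
  obtain ⟨C, hC, hwin⟩ := exists_window_lower hT hS hη hs' hC₂ hslack hstep heq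
  refine eventually_forall_ge_of_window hT (fun R t₁ t₂ hR h₁ h₂ => ?_) ?_
  · have := h₂.trans h₁ (by positivity)
    rw [← Real.rpow_mul hR.le, ← Real.rpow_mul hR.le, ← Real.rpow_add hR] at this
    convert this using 3; ring
  · filter_upwards [hwin, Ioo_mem_nhdsGT one_pos,
      eventually_mul_rpow_lt (mul_pos (sub_pos.2 hT) (sub_pos.2 hsS')) C one_pos]
      with R hR ⟨hR0, hR1⟩ hCR t ht
    exact (hR t ht).mono_const
      (mul_rpow_le_rpow_of_mul_rpow_le_one hR0 hR1.le hC hCR.le (by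
        nlinarith [mul_le_mul_of_nonneg_right (sub_le_sub_right ht.1 1) (sub_pos.2 hsS').le]))

end Interpolation

section Spectrum

variable {X : Type*} [MetricSpace X] [MeasurableSpace X] {μ : Measure X} [IsFiniteMeasure μ]

lemma one_div_mem_Ioc_of_one_div_le {θ t : ℝ} (hθ : 0 < θ) (ht : 1 / θ ≤ t) :
    1 / t ∈ Ioc 0 θ := by
  have ht0 : 0 < t := (one_div_pos.2 hθ).trans_le ht
  exact ⟨one_div_pos.2 ht0, by simpa using one_div_le_one_div_of_le (one_div_pos.2 hθ) ht⟩

theorem sInf_upperHSet_eq_iSup_upperEq {D θ : ℝ}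
    (hD : ∀ δ : ℝ, 0 < δ → ∃ s ∈ upperHSet μ δ, s ≤ D) (hθ0 : 0 < θ) (hθ1 : θ < 1) :
    sInf (upperHSet μ (1 / θ - 1)) = ⨆ ψ : {ψ : ℝ // 0 < ψ ∧ ψ ≤ θ}, upperEq μ ψ.1 := by
  have : Nonempty {ψ : ℝ // 0 < ψ ∧ ψ ≤ θ} := ⟨⟨θ, hθ0, le_rfl⟩⟩
  have hT : 1 < 1 / θ := by rw [lt_div_iff₀ hθ0]; linarith
  have hmeet : ∀ ψ : {ψ : ℝ // 0 < ψ ∧ ψ ≤ θ}, ∃ s ∈ upperEqSet μ ψ.1, s ≤ D := fun ψ => by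
    have hψ : 1 < 1 / ψ.1 := by rw [lt_div_iff₀ ψ.2.1]; linarith [ψ.2.2]
    obtain ⟨s, hs, hsD⟩ := hD _ (sub_pos.2 hψ)
    exact ⟨s, upperHSet_subset_upperEqSet (by linarith) (by rw [add_sub_cancel]) hs, hsD⟩
  have hbdd : BddAbove (range fun ψ : {ψ : ℝ // 0 < ψ ∧ ψ ≤ θ} => upperEq μ ψ.1) :=
    ⟨D, forall_mem_range.2 fun ψ =>
      let ⟨_, hs, hsD⟩ := hmeet ψ
      (csInf_le ⟨0, fun _ h => h.1⟩ hs).trans hsD⟩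
  apply le_antisymm
  · refine le_of_forall_gt_imp_ge_of_dense fun s hs => csInf_le ⟨0, fun _ h => h.1⟩ ?_
    obtain ⟨S, hS, hSs⟩ := exists_between hs
    have hS0 : 0 ≤ S := (Real.iSup_nonneg fun _ => Real.sInf_nonneg fun _ h => h.1).trans hS.le
    refine (mem_upperHSet_iff (by linarith)).2 ⟨by linarith, 1, one_pos, ?_⟩
    rw [add_sub_cancel]
    refine (eventually_massRatioLE_upper hT hS0 hSs hD fun t ht => ?_).mono
      fun R h t ht => by simpa using h t ht
    have hψ := one_div_mem_Ioc_of_one_div_le hθ0 ht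
    obtain ⟨a, ha, -⟩ := hmeet ⟨1 / t, hψ⟩
    simpa only [one_div_one_div] using eventually_massRatioLE_of_upperEq_lt hψ.1
      (hψ.2.trans hθ1.le) ⟨a, ha⟩ ((le_ciSup hbdd ⟨1 / t, hψ⟩).trans_lt hS)
  · obtain ⟨s₀, hs₀, -⟩ := hD _ (sub_pos.2 hT)
    exact ciSup_le fun ψ => le_csInf ⟨s₀, hs₀⟩ fun b hb => csInf_le ⟨0, fun _ h => h.1⟩ <|
      upperHSet_subset_upperEqSet (by linarith)
        (by simpa using one_div_le_one_div_of_le ψ.2.1 ψ.2.2) hb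

theorem sSup_lowerHSet_eq_iInf_lowerEq {x₀ : X} (hx₀ : x₀ ∈ msupp μ) {D θ : ℝ}
    (hD : ∀ δ : ℝ, 0 < δ → ∃ s ∈ upperHSet μ δ, s ≤ D) (hθ0 : 0 < θ) (hθ1 : θ < 1) :
    sSup (lowerHSet μ (1 / θ - 1)) = ⨅ ψ : {ψ : ℝ // 0 < ψ ∧ ψ ≤ θ}, lowerEq μ ψ.1 := by
  have : Nonempty {ψ : ℝ // 0 < ψ ∧ ψ ≤ θ} := ⟨⟨θ, hθ0, le_rfl⟩⟩
  have hT : 1 < 1 / θ := by rw [lt_div_iff₀ hθ0]; linarith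
  have hsub : ∀ ψ : {ψ : ℝ // 0 < ψ ∧ ψ ≤ θ}, lowerHSet μ (1 / θ - 1) ⊆ lowerEqSet μ ψ.1 :=
    fun ψ => lowerHSet_subset_lowerEqSet (by linarith)
      (by simpa using one_div_le_one_div_of_le ψ.2.1 ψ.2.2)
  have hbdd : ∀ ψ : {ψ : ℝ // 0 < ψ ∧ ψ ≤ θ}, BddAbove (lowerEqSet μ ψ.1) := fun ψ => by
    have hψ1 : ψ.1 < 1 := ψ.2.2.trans_lt hθ1
    have hψ : 1 < 1 / ψ.1 := by rw [lt_div_iff₀ ψ.2.1]; linarith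
    obtain ⟨s', hs', -⟩ := hD _ (sub_pos.2 hψ)
    exact ⟨s', fun s hs => le_of_mem_lowerEqSet_of_mem_upperHSet hx₀ ψ.2.1 hψ1 hs hs'⟩
  have hnonneg : ∀ ψ : {ψ : ℝ // 0 < ψ ∧ ψ ≤ θ}, 0 ≤ lowerEq μ ψ.1 :=
    fun _ => Real.sSup_nonneg fun _ h => h.1
  apply le_antisymm
  · exact Real.sSup_le (fun s hs => le_ciInf fun ψ => le_csSup (hbdd ψ) (hsub ψ hs))
      (Real.iInf_nonneg hnonneg)
  · refine le_of_forall_lt_imp_le_of_dense fun s hs => ?_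
    rcases lt_or_ge s 0 with hs0 | hs0
    · exact hs0.le.trans (Real.sSup_nonneg fun _ h => h.1)
    obtain ⟨S, hsS, hS⟩ := exists_between hs
    refine le_csSup ((hbdd ⟨θ, hθ0, le_rfl⟩).mono (hsub _))
      ((mem_lowerHSet_iff (by linarith)).2 ⟨hs0, 1, one_pos, ?_⟩)
    rw [add_sub_cancel]
    refine (eventually_massRatioLE_lower hT (by linarith) hsS hD fun t ht => ?_).mono
      fun R h t ht => by simpa using h t ht
    have hψ := one_div_mem_Ioc_of_one_div_le hθ0 ht
    simpa only [one_div_one_div] using eventually_massRatioLE_of_lt_lowerEq hψ.1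
      (hψ.2.trans hθ1.le) (by linarith)
      (hS.trans_le (ciInf_le ⟨0, forall_mem_range.2 hnonneg⟩ ⟨1 / t, hψ⟩))

end Spectrum

theorem assouad_spectrum_sup_inf_general
    {X : Type*} [MetricSpace X] [MeasurableSpace X]
    (μ : Measure X) [IsProbabilityMeasure μ]
    (hqA : ∃ D : ℝ, ∀ δ : ℝ, 0 < δ → ∃ s ∈ upperHSet μ δ, s ≤ D)
    (θ : ℝ) (hθ0 : 0 < θ) (hθ1 : θ < 1) :
    (sInf (upperHSet μ (1 / θ - 1)) = ⨆ ψ : {ψ : ℝ // 0 < ψ ∧ ψ ≤ θ}, upperEq μ ψ.1) ∧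
    (sSup (lowerHSet μ (1 / θ - 1)) = ⨅ ψ : {ψ : ℝ // 0 < ψ ∧ ψ ≤ θ}, lowerEq μ ψ.1) := by
  obtain ⟨D, hD⟩ := hqA
  refine ⟨sInf_upperHSet_eq_iSup_upperEq hD hθ0 hθ1, ?_⟩
  rcases (msupp μ).eq_empty_or_nonempty with h | ⟨x₀, hx₀⟩
  · -- with empty support every set involved is the unbounded `Ici 0`, whose `sSup` is the junk `0`
    simp [sSup_lowerHSet_of_msupp_eq_empty h, lowerEq_of_msupp_eq_empty h]
  · exact sSup_lowerHSet_eq_iInf_lowerEq hx₀ hD hθ0 hθ1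

theorem assouad_spectrum_sup_inf
    {X : Type*} [MetricSpace X] [MeasurableSpace X] [BorelSpace X]
    (μ : Measure X) [IsProbabilityMeasure μ] (hcpt : IsCompact (msupp μ))
    (hqA : ∃ D : ℝ, ∀ δ : ℝ, 0 < δ → ∃ s ∈ upperHSet μ δ, s ≤ D)
    (θ : ℝ) (hθ0 : 0 < θ) (hθ1 : θ < 1) :
    (sInf (upperHSet μ (1 / θ - 1)) = ⨆ ψ : {ψ : ℝ // 0 < ψ ∧ ψ ≤ θ}, upperEq μ ψ.1) ∧
    (sSup (lowerHSet μ (1 / θ - 1)) = ⨅ ψ : {ψ : ℝ // 0 < ψ ∧ ψ ≤ θ}, lowerEq μ ψ.1) :=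
  assouad_spectrum_sup_inf_general μ hqA θ hθ0 hθ1
end
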